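/- arXiv:2309.02763 — 2 statements merged into one kernel-verified Lean document; each statement's English description precedes it below -/
import Mathlib

section
/- For every integer n ≥ 1, every one-way nondeterministic finite automaton (NFA) over the two-letter alphabet {a,b} whose accepted language equals J_n has at least 2^n states. -/
/-- The language `K_n`: words of the form `x₁ ⋯ x_k · x` where `k > 0`, each block
`x_i` and `x` has length `n` over the alphabet `{a,b}` (encoded as `Bool`), and
`x_j = x` for some `j`. -/
def Kn (n : ℕ) : Language Bool :=
  { w | ∃ (l : List (List Bool)) (x : List Bool),
      l ≠ [] ∧ (∀ y ∈ l, y.length = n) ∧ x.length = n ∧ x ∈ l ∧ w = l.flatten ++ x }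

/-- The language `J_n`: words of the form `x · x₁ ⋯ x_k` where `k > 0`, each block
`x_i` and `x` has length `n` over the alphabet `{a,b}` (encoded as `Bool`), and
`x_j = x` for some `j`. -/
def Jn (n : ℕ) : Language Bool :=
  { w | ∃ (l : List (List Bool)) (x : List Bool),
      l ≠ [] ∧ (∀ y ∈ l, y.length = n) ∧ x.length = n ∧ x ∈ l ∧ w = x ++ l.flatten }

lemma mem_evalFrom_iff_aux {σ : Type} (M : NFA Bool σ) (w : List Bool) :
    ∀ (S : Set σ) (q : σ), q ∈ M.evalFrom S w ↔ ∃ p ∈ S, q ∈ M.evalFrom {p} w := by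
  induction w with
  | nil => intro S q; simp [NFA.evalFrom]
  | cons a w ih =>
    intro S q
    have h1 : M.evalFrom S (a :: w) = M.evalFrom (M.stepSet S a) w := rfl
    have h2 : ∀ p : σ, M.evalFrom {p} (a :: w) = M.evalFrom (M.stepSet {p} a) w :=
      fun p => rfl
    rw [h1, ih]
    constructor
    · rintro ⟨r, hr, hq⟩
      rw [NFA.mem_stepSet] at hr
      obtain ⟨p, hp, hr⟩ := hr
      exact ⟨p, hp, by rw [h2, ih]; exact ⟨r, by rw [NFA.mem_stepSet]; exact ⟨p, rfl, hr⟩, hq⟩⟩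
    · rintro ⟨p, hp, hq⟩
      rw [h2, ih] at hq
      obtain ⟨r, hr, hq⟩ := hq
      rw [NFA.mem_stepSet] at hr
      obtain ⟨p', hp', hr⟩ := hr
      rw [Set.mem_singleton_iff] at hp'
      rw [hp'] at hr
      exact ⟨r, by rw [NFA.mem_stepSet]; exact ⟨p, hp, hr⟩, hq⟩

lemma self_mem_Jn {n : ℕ} {x : List Bool} (hx : x.length = n) : x ++ x ∈ Jn n :=
  ⟨[x], x, by simp, by simpa using hx, hx, by simp, by simp⟩

lemma Jn_cancel {n : ℕ} (hn : 1 ≤ n) {x y : List Bool} (hx : x.length = n)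
    (hy : y.length = n) (h : x ++ y ∈ Jn n) : x = y := by
  obtain ⟨l, z, hl, hlen, hz, hzl, heq⟩ := h
  have hjoin : l.flatten.length = l.length * n := by
    rw [List.length_flatten]
    rw [List.map_congr_left hlen]
    simp [List.sum_replicate, List.map_const']
  have hlenw : x.length + y.length = z.length + l.flatten.length := by
    have := congrArg List.length heq; simpa using this
  rw [hx, hy, hz, hjoin] at hlenw
  have hl1 : l.length = 1 := by
    have hpos : 1 ≤ l.length := List.length_pos_iff.mpr hl
    nlinarith
  obtain ⟨w, hw⟩ := List.length_eq_one_iff.mp hl1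
  subst hw
  simp at hzl
  subst hzl
  simp at heq
  obtain ⟨h1, h2⟩ := List.append_inj heq (by rw [hx, hz])
  rw [h1, h2]

/-- Every NFA over `{a,b}` accepting exactly `J_n` has at least `2^n` states. -/
theorem nfa_Jn_states (n : ℕ) (hn : 1 ≤ n) (σ : Type) [Fintype σ]
    (M : NFA Bool σ) (h : M.accepts = Jn n) :
    2 ^ n ≤ Fintype.card σ := by
  classical
  -- for each x of length n, x ++ x ∈ accepts
  have key : ∀ v : Fin n → Bool, ∃ q : σ, q ∈ M.eval (List.ofFn v) ∧
      ∃ f ∈ M.accept, f ∈ M.evalFrom {q} (List.ofFn v) := by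
    intro v
    have hx : (List.ofFn v).length = n := by simp
    have hacc : (List.ofFn v ++ List.ofFn v) ∈ M.accepts := by
      rw [h]; exact self_mem_Jn hx
    obtain ⟨f, hf, hfe⟩ := hacc
    have : f ∈ M.evalFrom (M.eval (List.ofFn v)) (List.ofFn v) := by
      have : M.eval (List.ofFn v ++ List.ofFn v)
          = M.evalFrom (M.eval (List.ofFn v)) (List.ofFn v) := by
        simp [NFA.eval, NFA.evalFrom, List.foldl_append]
      rwa [this] at hfe
    rw [mem_evalFrom_iff_aux] at this
    obtain ⟨q, hq, hfq⟩ := this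
    exact ⟨q, hq, f, hf, hfq⟩
  choose g hg1 hg2 using key
  have hinj : Function.Injective g := by
    intro u v huv
    by_contra hne
    have hxy : (List.ofFn u ++ List.ofFn v) ∈ M.accepts := by
      obtain ⟨f, hf, hfq⟩ := hg2 v
      refine ⟨f, hf, ?_⟩
      have : M.eval (List.ofFn u ++ List.ofFn v)
          = M.evalFrom (M.eval (List.ofFn u)) (List.ofFn v) := by
        simp [NFA.eval, NFA.evalFrom, List.foldl_append]
      rw [NFA.eval] at this ⊢
      rw [this, mem_evalFrom_iff_aux]
      exact ⟨g u, hg1 u, by rw [huv]; exact hfq⟩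
    rw [h] at hxy
    have := Jn_cancel hn (by simp) (by simp) hxy
    exact hne (List.ofFn_inj.mp this)
  calc 2 ^ n = Fintype.card (Fin n → Bool) := by simp
    _ ≤ Fintype.card σ := Fintype.card_le_of_injective g hinj
end

section
/- For every integer n ≥ 1, every nonempty list l of words over {a,b} each of length n, and every word x of length n over {a,b}, the concatenation l.join ++ x belongs to K_n if and only if x is an element of l. (In particular, the block decomposition of a word of K_n into length-n blocks is unique.) -/
lemma join_unique (n : ℕ) (hn : 1 ≤ n) :
    ∀ (l l' : List (List Bool)), (∀ y ∈ l, y.length = n) → (∀ y ∈ l', y.length = n) →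
      l.flatten = l'.flatten → l = l' := by
  intro l
  induction l with
  | nil =>
      intro l' _ h' hj
      cases l' with
      | nil => rfl
      | cons a t =>
          exfalso
          have ha : a.length = n := h' a (by simp)
          have : a ++ t.flatten = [] := hj.symm
          have := congrArg List.length this
          simp [ha] at this
          omega
  | cons a t ih =>
      intro l' h h' hj
      cases l' with
      | nil =>
          exfalso
          have ha : a.length = n := h a (by simp)
          have := congrArg List.length hj
          simp [ha] at this
          omega
      | cons a' t' =>
          have ha : a.length = n := h a (by simp)
          have ha' : a'.length = n := h' a' (by simp)
          simp only [List.flatten_cons] at hj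
          obtain ⟨h1, h2⟩ := List.append_inj hj (by omega)
          have := ih t' (fun y hy => h y (by simp [hy])) (fun y hy => h' y (by simp [hy])) h2
          simp [h1, this]

/-- For any nonempty list `l` of length-`n` blocks and any word `x` of length `n`,
`l.join ++ x ∈ K_n` iff `x ∈ l`. -/
theorem join_append_mem_Kn_iff (n : ℕ) (hn : 1 ≤ n)
    (l : List (List Bool)) (hl : l ≠ []) (hlen : ∀ y ∈ l, y.length = n)
    (x : List Bool) (hx : x.length = n) :
    l.flatten ++ x ∈ Kn n ↔ x ∈ l := by
  constructor
  · rintro ⟨l', x', hl', hlen', hx', hmem', heq⟩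
    have hjlen : l.flatten.length = l'.flatten.length := by
      have := congrArg List.length heq
      simp only [List.length_append, hx, hx'] at this
      omega
    obtain ⟨h1, h2⟩ := List.append_inj heq hjlen
    have := join_unique n hn l l' hlen hlen' h1
    subst this
    rwa [← h2] at hmem'
  · intro hmem
    exact ⟨l, x, hl, hlen, hx, hmem, rfl⟩
end
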